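/- arXiv:1210.3408 — 2 statements merged into one kernel-verified Lean document; each statement's English description precedes it below -/
import Mathlib

section
/- Let m ≥ 1, let p : ℝ^m → ℝ be the evaluation of a non-constant polynomial in m variables, and let E ⊆ ℝ^m be a measurable set with E ⊆ {λ : 0 < |p(λ)| ≤ 1} and ∫_E |p(λ)| dλ = 1. Then the Lebesgue measure of E is strictly greater than 1; consequently E cannot be contained in any measurable fundamental domain for ℤ^m. -/
open MeasureTheory Matrix Set ComplexConjugate
open scoped Real ENNReal

noncomputable section

/-- An integer vector viewed as a real vector. -/
def intVec {d : ℕ} (k : Fin d → ℤ) : Fin d → ℝ := fun i => (k i : ℝ)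

/-- `e2pi x = e^{2πix}`. -/
def e2pi (x : ℝ) : ℂ := Complex.exp (2 * Real.pi * Complex.I * x)

/-- Time–frequency shift: `π(n,ω)f(x) = e^{2πi⟨ω,x⟩} f(x−n)`. -/
def tfShift {d : ℕ} (n ω : Fin d → ℝ) (f : (Fin d → ℝ) → ℂ) : (Fin d → ℝ) → ℂ :=
  fun x => e2pi (ω ⬝ᵥ x) * f (x - n)

/-- A countable family of functions is a Parseval frame for `L²(μ)`. -/
def IsParsevalFrame {α : Type*} [MeasurableSpace α] (μ : Measure α) {ι : Type*}
    (F : ι → α → ℂ) : Prop :=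
  ∀ g : α → ℂ, MemLp g 2 μ →
    ∑' i : ι, ‖∫ x, g x * conj (F i x) ∂μ‖ ^ 2 = ∫ x, ‖g x‖ ^ 2 ∂μ

/-- A countable family of functions is an orthonormal basis of `L²(μ)`:
it consists of `L²` functions, is orthonormal, and satisfies the Parseval identity. -/
def IsONB {α : Type*} [MeasurableSpace α] (μ : Measure α) {ι : Type*}
    (F : ι → α → ℂ) : Prop :=
  (∀ i, MemLp (F i) 2 μ) ∧
  (∀ i, (∫ x, F i x * conj (F i x) ∂μ) = 1) ∧
  (∀ i i', i ≠ i' → (∫ x, F i x * conj (F i' x) ∂μ) = 0) ∧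
  IsParsevalFrame μ F

/-- The setTranslate `E + v` of a set. -/
def setTranslate {d : ℕ} (v : Fin d → ℝ) (E : Set (Fin d → ℝ)) : Set (Fin d → ℝ) :=
  (fun x => x + v) '' E

/-- `E` packs `ℝ^d` by the lattice `{L k : k ∈ ℤ^d}`: distinct translates of `E`
by lattice points intersect in Lebesgue-null sets. -/
def PacksBy {d : ℕ} (E : Set (Fin d → ℝ)) (L : (Fin d → ℤ) → (Fin d → ℝ)) : Prop :=
  ∀ k k' : Fin d → ℤ, k ≠ k' → volume (setTranslate (L k) E ∩ setTranslate (L k') E) = 0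

/-- `E` tiles `ℝ^d` by the lattice `{L k : k ∈ ℤ^d}`: it packs and the translates
cover `ℝ^d` up to a Lebesgue-null set. -/
def TilesBy {d : ℕ} (E : Set (Fin d → ℝ)) (L : (Fin d → ℤ) → (Fin d → ℝ)) : Prop :=
  PacksBy E L ∧ volume (Set.univ \ ⋃ k : Fin d → ℤ, setTranslate (L k) E) = 0

/-- A measurable fundamental domain for the lattice `ℤ^d` in `ℝ^d`. -/
def IsFundDomain {d : ℕ} (D : Set (Fin d → ℝ)) : Prop :=
  MeasurableSet D ∧ TilesBy D intVec

/-! A non-constant polynomial `p` takes each value `c` only on a Lebesgue-null set: `p - c` is a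
nonzero polynomial, and by Fubini and induction on the number of variables its zero set is null.
Hence `|p| < 1` almost everywhere on `E`, and if `vol E ≤ 1` then `1 = ∫_E |p| < vol E`, absurd.
On the other hand the translates of a fundamental domain `D` by `ℤ^m` are almost disjoint, so
comparing with the unit cube gives `vol D ≤ 1`, which rules out `E ⊆ D`. -/

theorem Polynomial.ae_eval_ne_zero {μ : Measure ℝ} [NullSingletonClass μ] {q : Polynomial ℝ}
    (hq : q ≠ 0) : ∀ᵐ a ∂μ, q.eval a ≠ 0 :=
  measure_eq_zero_iff_ae_notMem.mp ((Polynomial.finite_setOfPred_isRoot hq).measure_zero μ)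

namespace MvPolynomial

theorem ae_eval_ne_zero :
    ∀ {n : ℕ} {p : MvPolynomial (Fin n) ℝ}, p ≠ 0 → ∀ᵐ x, eval x p ≠ 0
  | 0, p, hp => by
    obtain ⟨a, rfl⟩ := C_surjective (Fin 0) p
    exact ae_of_all _ fun x => by simpa using hp
  | n + 1, p, hp => by
    set q := finSuccEquiv ℝ n p
    obtain ⟨j, hj⟩ : ∃ j, q.coeff j ≠ 0 := by
      by_contra! h
      exact hp ((finSuccEquiv ℝ n).injective (by ext1 j; simp [q, h j]))
    have hslice : ∀ᵐ y : Fin n → ℝ, ∀ᵐ a : ℝ, eval (Fin.cons a y) p ≠ 0 := by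
      filter_upwards [ae_eval_ne_zero hj] with y hy
      have hqy : q.map (eval y) ≠ 0 := fun h => hy <| by
        simpa [h] using (Polynomial.coeff_map (eval y) j (p := q)).symm
      simpa only [eval_eq_eval_mv_eval'] using Polynomial.ae_eval_ne_zero hqy
    have hprod : ∀ᵐ z : ℝ × (Fin n → ℝ), eval (Fin.cons z.1 z.2) p ≠ 0 := by
      have hmeas : MeasurableSet {z : ℝ × (Fin n → ℝ) | eval (Fin.cons z.1 z.2) p ≠ 0} :=
        (isOpen_ne_fun ((continuous_eval p).comp (continuous_fst.finCons continuous_snd))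
          continuous_const).measurableSet
      rw [Measure.volume_eq_prod, Measure.ae_prod_iff_ae_ae hmeas, Measure.ae_ae_comm hmeas]
      exact hslice
    have hsplit := volume_preserving_piFinSuccAbove (fun _ : Fin (n + 1) => ℝ) 0
    filter_upwards [hsplit.quasiMeasurePreserving.ae hprod] with x hx
    simpa using hx

theorem ae_eval_ne_of_totalDegree_pos {n : ℕ} {p : MvPolynomial (Fin n) ℝ}
    (hp : 0 < p.totalDegree) (c : ℝ) : ∀ᵐ x, eval x p ≠ c := by
  have hpc : p - C c ≠ 0 := fun h => by
    rw [sub_eq_zero.mp h, totalDegree_C] at hp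
    exact hp.false
  filter_upwards [ae_eval_ne_zero hpc] with x hx
  simpa [sub_eq_zero] using hx

end MvPolynomial

namespace MeasureTheory

variable {α : Type*} [MeasurableSpace α] {μ : Measure α}

theorem integral_lt_integral_of_ae_lt {f g : α → ℝ} (hμ : μ ≠ 0) (hf : Integrable f μ)
    (hg : Integrable g μ) (hlt : ∀ᵐ x ∂μ, f x < g x) : ∫ x, f x ∂μ < ∫ x, g x ∂μ := by
  rw [← sub_pos, ← integral_sub hg hf]
  have hsupp : Function.support (fun x => g x - f x) =ᵐ[μ] (univ : Set α) :=
    ae_eq_univ.mpr (measure_eq_zero_iff_ae_notMem.mpr <| hlt.mono fun x hx => by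
      simpa [sub_eq_zero] using hx.ne')
  rw [integral_pos_iff_support_of_nonneg_ae (hlt.mono fun x hx => sub_nonneg.mpr hx.le)
    (hg.sub hf), measure_congr hsupp, pos_iff_ne_zero, Ne, Measure.measure_univ_eq_zero]
  exact hμ

theorem one_lt_measure_of_setIntegral_eq_one {s : Set α} {f : α → ℝ}
    (hlt : ∀ᵐ x ∂μ.restrict s, f x < 1) (hint : ∫ x in s, f x ∂μ = 1) : 1 < μ s := by
  by_contra! hle
  have hμs : μ.restrict s ≠ 0 := fun h => by simp [h] at hint
  have : IsFiniteMeasure (μ.restrict s) :=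
    ⟨by simpa using hle.trans_lt ENNReal.one_lt_top⟩
  have hf : Integrable f (μ.restrict s) := Integrable.of_integral_ne_zero (by simp [hint])
  have := integral_lt_integral_of_ae_lt hμs hf (integrable_const (1 : ℝ)) hlt
  rw [hint, integral_const, smul_eq_mul, mul_one, Measure.real_def,
    Measure.restrict_apply_univ] at this
  exact this.not_ge (ENNReal.toReal_le_of_le_ofReal zero_le_one (by simpa using hle))

end MeasureTheory

theorem exists_intVec_eq_of_mem_span {d : ℕ} {v : Fin d → ℝ}
    (hv : v ∈ Submodule.span ℤ (range (Pi.basisFun ℝ (Fin d)))) : ∃ k, intVec k = v := by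
  choose k hk using ((Pi.basisFun ℝ (Fin d)).mem_span_iff_repr_mem ℤ v).mp hv
  exact ⟨k, funext fun i => by simpa [intVec] using hk i⟩

open scoped Pointwise in
theorem volume_le_one_of_packsBy_intVec {d : ℕ} {D : Set (Fin d → ℝ)}
    (hD : NullMeasurableSet D) (hpack : PacksBy D intVec) : volume D ≤ 1 := by
  let Λ := (Submodule.span ℤ (range (Pi.basisFun ℝ (Fin d)))).toAddSubgroup
  have : Countable Λ := inferInstanceAs (Countable (Submodule.span ℤ _))
  have hF : IsAddFundamentalDomain Λ (ZSpan.fundamentalDomain (Pi.basisFun ℝ (Fin d))) :=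
    ZSpan.isAddFundamentalDomain' _ volume
  have hF_vol : volume (ZSpan.fundamentalDomain (Pi.basisFun ℝ (Fin d))) = 1 := by
    simp [ZSpan.fundamentalDomain_pi_basisFun, volume_pi_pi]
  have htranslate (g : Λ) : g +ᵥ D = setTranslate g D := by
    simp only [setTranslate, ← Set.image_vadd, AddSubgroup.vadd_def, vadd_eq_add, add_comm]
  refine hF_vol ▸ hF.measure_le_of_pairwise_disjoint hD fun g g' hne => ?_
  obtain ⟨k, hk⟩ := exists_intVec_eq_of_mem_span g.2
  obtain ⟨k', hk'⟩ := exists_intVec_eq_of_mem_span g'.2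
  refine measure_mono_null (fun x hx => ?_) (hpack k k' fun h => hne (Subtype.ext ?_))
  · rw [hk, hk', ← htranslate, ← htranslate]
    exact ⟨hx.1.1, hx.2.1⟩
  · subst h
    exact hk.symm.trans hk'

theorem volume_gt_one_of_integral_eq_one_general
    (m : ℕ) (p : MvPolynomial (Fin m) ℝ) (hp : 0 < p.totalDegree)
    (E : Set (Fin m → ℝ)) (hEmeas : MeasurableSet E)
    (hEsub : E ⊆ {l : Fin m → ℝ |
      0 < |MvPolynomial.eval l p| ∧ |MvPolynomial.eval l p| ≤ 1})
    (hint : ∫ l in E, |MvPolynomial.eval l p| = 1) :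
    1 < volume E ∧ ∀ D : Set (Fin m → ℝ), IsFundDomain D → ¬ E ⊆ D := by
  have hlt : ∀ᵐ l ∂volume.restrict E, |MvPolynomial.eval l p| < 1 := by
    filter_upwards [ae_restrict_mem hEmeas,
      ae_restrict_of_ae (MvPolynomial.ae_eval_ne_of_totalDegree_pos hp 1),
      ae_restrict_of_ae (MvPolynomial.ae_eval_ne_of_totalDegree_pos hp (-1))] with l hlE h1 h2
    exact (hEsub hlE).2.lt_of_ne fun h => (abs_eq zero_le_one).mp h |>.elim h1 h2
  have hvol : 1 < volume E := one_lt_measure_of_setIntegral_eq_one hlt hint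
  refine ⟨hvol, fun D hD hED => hvol.not_ge ?_⟩
  exact (measure_mono hED).trans (volume_le_one_of_packsBy_intVec hD.1.nullMeasurableSet hD.2.1)

/-- Let `p` be a non-constant polynomial in `m` real variables and let `E ⊆ ℝ^m` be
measurable with `E ⊆ {λ : 0 < |p(λ)| ≤ 1}` and `∫_E |p(λ)| dλ = 1`. Then the Lebesgue
measure of `E` is strictly greater than `1`; consequently `E` is not contained in any
measurable fundamental domain for `ℤ^m`. -/
theorem volume_gt_one_of_integral_eq_one
    (m : ℕ) (hm : 1 ≤ m) (p : MvPolynomial (Fin m) ℝ) (hp : 0 < p.totalDegree)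
    (E : Set (Fin m → ℝ)) (hEmeas : MeasurableSet E)
    (hEsub : E ⊆ {l : Fin m → ℝ |
      0 < |MvPolynomial.eval l p| ∧ |MvPolynomial.eval l p| ≤ 1})
    (hint : ∫ l in E, |MvPolynomial.eval l p| = 1) :
    1 < volume E ∧ ∀ D : Set (Fin m → ℝ), IsFundDomain D → ¬ E ⊆ D :=
  volume_gt_one_of_integral_eq_one_general m p hp E hEmeas hEsub hint
end
end

section
/- Let d ≥ 1. For i = 1, 2, let B_i ∈ GL_d(ℝ) and let E_i ⊆ ℝ^d be measurable sets such that E_i tiles ℝ^d by ℤ^d and packs ℝ^d by B_i^{−tr}ℤ^d, and set u_i = |det B_i|^{1/2} χ_{E_i} ∈ L²(ℝ^d), so that the families (π_{B_i}(j,l)u_i)_{j,l∈ℤ^d} are Parseval frames for L²(ℝ^d). Assume that for every m ∈ ℤ^d, the union B_1^{tr}(E_1 + m) ∪ B_2^{tr}(E_2 + m) is contained in some measurable fundamental domain for ℤ^d, and the intersection B_1^{tr}(E_1 + m) ∩ B_2^{tr}(E_2 + m) is a Lebesgue-null set. Then for all f, g ∈ L²(ℝ^d), the Gabor coefficient sequences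 are orthogonal in ℓ²(ℤ^d × ℤ^d): ∑_{(m,l) ∈ ℤ^d × ℤ^d} ⟨f, π_{B_1}(m,l)u_1⟩ · conj(⟨g, π_{B_2}(m,l)u_2⟩) = 0. -/
open MeasureTheory Matrix Set ComplexConjugate
open scoped Real ENNReal

noncomputable section

/-- The Gabor operator `π_B(j,l)h(t) = e^{−2πi⟨B l, t⟩} h(t − j)` for `j, l ∈ ℤ^d`. -/
def gaborOp {d : ℕ} (B : Matrix (Fin d) (Fin d) ℝ) (j l : Fin d → ℤ)
    (h : (Fin d → ℝ) → ℂ) : (Fin d → ℝ) → ℂ :=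
  fun t => e2pi (-(B.mulVec (intVec l) ⬝ᵥ t)) * h (t - intVec j)

/-- The measure `|det B(λ)| dλ dt` on `C × ℝ^d` (with `dλ` Lebesgue measure restricted
to `C` and `dt` Lebesgue measure on `ℝ^d`), so that `L²` of this measure is the space
`𝓗 = L²(C × ℝ^d, |det B(λ)| dλ dt)`. -/
def bandMeasure {m d : ℕ} (C : Set (Fin m → ℝ))
    (B : (Fin m → ℝ) → Matrix (Fin d) (Fin d) ℝ) :
    Measure ((Fin m → ℝ) × (Fin d → ℝ)) :=
  (((volume : Measure (Fin m → ℝ)).restrict C).prod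
    (volume : Measure (Fin d → ℝ))).withDensity
      fun p => ENNReal.ofReal |(B p.1).det|

/-!
For fixed `m`, the substitution `s = Bᵢᵀ t` turns `⟨f, π_{Bᵢ}(m,l) uᵢ⟩` into
`|det Bᵢ|^{-1/2} ∫_D Fᵢ(s) e^{2πi⟨l,s⟩} ds`, where `Fᵢ` is `f ∘ Bᵢ^{-tr}` cut off to
`Wᵢ = Bᵢᵀ(Eᵢ + m)` and `D` is a fundamental domain of `ℤ^d` containing `W₁ ∪ W₂`. The projection
`ℝ^d → ℝ^d/ℤ^d` maps `D` essentially injectively and measure-preservingly onto the torus, so the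
exponentials form an orthonormal basis of `L²(D)` and Parseval's identity gives
`∑_l ⟨f, π_{B₁}(m,l)u₁⟩ conj ⟨g, π_{B₂}(m,l)u₂⟩ = c ∫_{W₁ ∩ W₂} F₁ conj F₂ = 0`.
The frame property makes the double series summable, so it may be summed over `l` first.
-/

namespace Gabor

open Submodule UnitAddTorus
open scoped Pointwise

variable {d : ℕ}

@[simp] lemma intVec_zero : intVec (0 : Fin d → ℤ) = 0 := by
  funext i; simp [intVec]

lemma mem_setTranslate {v x : Fin d → ℝ} {E : Set (Fin d → ℝ)} :
    x ∈ setTranslate v E ↔ x - v ∈ E :=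
  ⟨by rintro ⟨e, he, rfl⟩; simpa using he, fun h => ⟨x - v, h, by simp⟩⟩

@[simp] lemma setTranslate_zero (E : Set (Fin d → ℝ)) : setTranslate 0 E = E := by
  ext x; simp [mem_setTranslate]

lemma measurableSet_setTranslate {E : Set (Fin d → ℝ)} (hE : MeasurableSet E) (v : Fin d → ℝ) :
    MeasurableSet (setTranslate v E) := by
  convert hE.preimage (measurable_id.sub_const v)
  ext x
  exact mem_setTranslate

lemma conj_e2pi (x : ℝ) : conj (e2pi x) = e2pi (-x) := by
  simp only [e2pi, ← Complex.exp_conj, map_mul, Complex.conj_ofReal, Complex.conj_I, map_ofNat]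
  push_cast
  ring_nf

-- `ℤ^d`, as the `ℤ`-span of the standard basis so that `ZSpan`'s fundamental domain applies.
abbrev intLattice (d : ℕ) : AddSubgroup (Fin d → ℝ) :=
  (span ℤ (Set.range (Pi.basisFun ℝ (Fin d)))).toAddSubgroup

instance : Countable (intLattice d) :=
  inferInstanceAs (Countable (span ℤ (Set.range (Pi.basisFun ℝ (Fin d)))))

lemma mem_intLattice_iff {v : Fin d → ℝ} : v ∈ intLattice d ↔ ∀ i, ∃ n : ℤ, (n : ℝ) = v i := by
  simp [Module.Basis.mem_span_iff_repr_mem]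

lemma exists_intVec_eq_of_mem_intLattice {v : Fin d → ℝ} (hv : v ∈ intLattice d) :
    ∃ k : Fin d → ℤ, intVec k = v := by
  choose k hk using mem_intLattice_iff.1 hv
  exact ⟨k, funext hk⟩

lemma intVec_mem_intLattice (k : Fin d → ℤ) : intVec k ∈ intLattice d :=
  mem_intLattice_iff.2 fun i => ⟨k i, rfl⟩

lemma vadd_set_eq_setTranslate (g : intLattice d) (D : Set (Fin d → ℝ)) :
    g +ᵥ D = setTranslate (g : Fin d → ℝ) D := by
  ext x
  simp [Set.mem_vadd_set_iff_neg_vadd_mem, mem_setTranslate, AddSubgroup.vadd_def, sub_eq_neg_add]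

lemma _root_.IsFundDomain.isAddFundamentalDomain {D : Set (Fin d → ℝ)} (hD : IsFundDomain D) :
    IsAddFundamentalDomain (intLattice d) D := by
  obtain ⟨hDm, hpack, hcover⟩ := hD
  refine .mk'' hDm.nullMeasurableSet ?_ ?_ fun g =>
    (measurePreserving_add_left volume (g : Fin d → ℝ)).quasiMeasurePreserving
  · filter_upwards [measure_eq_zero_iff_ae_notMem.1 hcover] with x hx
    obtain ⟨k, y, hy, rfl⟩ := Set.mem_iUnion.1 (not_not.1 fun h => hx ⟨trivial, h⟩)
    refine ⟨-⟨intVec k, intVec_mem_intLattice k⟩, ?_⟩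
    simpa [AddSubgroup.vadd_def] using hy
  · intro g hg
    obtain ⟨k, hk⟩ := exists_intVec_eq_of_mem_intLattice g.2
    have hk0 : k ≠ 0 := by
      rintro rfl
      exact hg (Subtype.ext (by simp [← hk]))
    simpa [vadd_set_eq_setTranslate, ← hk, AEDisjoint] using hpack k 0 hk0

-- The measure of Mathlib's multivariate Fourier theory; the global `volume` on `UnitAddCircle` is
-- `ENNReal.ofReal 1 • haarAddCircle`, which is not definitionally the same.
abbrev torusHaar (d : ℕ) : Measure (UnitAddTorus (Fin d)) :=
  Measure.pi fun _ => AddCircle.haarAddCircle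

def torusProj (d : ℕ) (x : Fin d → ℝ) : UnitAddTorus (Fin d) := fun i => (x i : UnitAddCircle)

lemma measurable_torusProj : Measurable (torusProj d) :=
  measurable_pi_lambda _ fun i => AddCircle.measurable_mk'.comp (measurable_pi_apply i)

lemma torusProj_eq_torusProj_iff {x y : Fin d → ℝ} :
    torusProj d x = torusProj d y ↔ y - x ∈ intLattice d := by
  simp only [mem_intLattice_iff, funext_iff, torusProj, Pi.sub_apply]
  refine forall_congr' fun i => ?_
  rw [eq_comm, ← sub_eq_zero, ← AddCircle.coe_sub, AddCircle.coe_eq_zero_iff]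
  simp

lemma torusHaar_apply {A : Set (UnitAddTorus (Fin d))} (hA : MeasurableSet A) :
    torusHaar d A = volume (torusProj d ⁻¹' A ∩ Set.univ.pi fun _ => Set.Ico 0 1) := by
  have hIoc : {x : Fin d → ℝ | ∀ i, x i ∈ Set.Ioc ((0 : Fin d → ℝ) i) ((0 : Fin d → ℝ) i + 1)}
      = Set.univ.pi fun _ => Set.Ioc 0 1 := by
    ext x; simp
  have hae : (Set.univ.pi fun _ : Fin d => Set.Ico (0 : ℝ) 1)
      =ᵐ[volume] Set.univ.pi fun _ => Set.Ioc 0 1 := by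
    rw [volume_pi]
    exact (Measure.univ_pi_Ico_ae_eq_Icc (f := 0) (g := 1)).trans
      (Measure.univ_pi_Ioc_ae_eq_Icc (f := 0) (g := 1)).symm
  have hqA := hA.preimage (measurable_torusProj (d := d))
  rw [measure_congr ((ae_eq_refl _).inter hae), ← Measure.restrict_apply hqA,
    ← lintegral_indicator_one hqA, ← lintegral_indicator_one hA, ← hIoc]
  exact lintegral_preimage (A.indicator 1) 0

lemma measurePreserving_torusProj {D : Set (Fin d → ℝ)}
    (hD : IsAddFundamentalDomain (intLattice d) D) :
    MeasurePreserving (torusProj d) (volume.restrict D) (torusHaar d) := by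
  refine ⟨measurable_torusProj, Measure.ext fun A hA => ?_⟩
  have hqA : MeasurableSet (torusProj d ⁻¹' A) := hA.preimage measurable_torusProj
  have hcube : IsAddFundamentalDomain (intLattice d)
      (Set.univ.pi fun _ : Fin d => Set.Ico (0 : ℝ) 1) := by
    simpa [ZSpan.fundamentalDomain_pi_basisFun] using
      ZSpan.isAddFundamentalDomain' (Pi.basisFun ℝ (Fin d)) volume
  have hper : ∀ g : intLattice d, (g +ᵥ ·) ⁻¹' (torusProj d ⁻¹' A) = torusProj d ⁻¹' A := by
    intro g
    ext x
    simp only [Set.mem_preimage, AddSubgroup.vadd_def, vadd_eq_add]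
    rw [torusProj_eq_torusProj_iff (x := (g : Fin d → ℝ) + x) (y := x) |>.2
      (by rw [sub_add_cancel_right]; exact neg_mem g.2)]
  rw [Measure.map_apply measurable_torusProj hA, Measure.restrict_apply hqA,
    hD.measure_set_eq hcube hqA hper, torusHaar_apply hA]

lemma exists_injOn_torusProj {D : Set (Fin d → ℝ)} (hDm : MeasurableSet D)
    (hD : IsAddFundamentalDomain (intLattice d) D) :
    ∃ s ⊆ D, MeasurableSet s ∧ volume (D \ s) = 0 ∧ Set.InjOn (torusProj d) s := by
  set N := ⋃ g : {g : intLattice d // g ≠ 0}, D ∩ (g.1 +ᵥ D)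
  have hNnull : volume N = 0 := measure_iUnion_null fun g => by
    simpa [AEDisjoint, Set.inter_comm] using hD.aedisjoint g.2
  refine ⟨D \ N, Set.sdiff_subset, hDm.diff (.iUnion fun g => hDm.inter (hDm.const_vadd _)),
    measure_mono_null (by simp) hNnull, ?_⟩
  rintro x ⟨hxD, -⟩ y ⟨hyD, hyN⟩ hxy
  have hmem := torusProj_eq_torusProj_iff.1 hxy
  by_contra hne
  refine hyN (Set.mem_iUnion.2 ⟨⟨⟨y - x, hmem⟩, fun h => hne ?_⟩, hyD, ?_⟩)
  · exact (sub_eq_zero.1 (congrArg Subtype.val h)).symm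
  · exact ⟨x, hxD, by simp [AddSubgroup.vadd_def]⟩

lemma exists_comp_torusProj_ae_eq {D : Set (Fin d → ℝ)} (hDm : MeasurableSet D)
    (hD : IsAddFundamentalDomain (intLattice d) D) {F : (Fin d → ℝ) → ℂ}
    (hF : AEStronglyMeasurable F (volume.restrict D)) :
    ∃ Φ : UnitAddTorus (Fin d) → ℂ, StronglyMeasurable Φ ∧
      Φ ∘ torusProj d =ᵐ[volume.restrict D] F := by
  obtain ⟨s, hsD, hsm, hDs, hinj⟩ := exists_injOn_torusProj hDm hD
  have : StandardBorelSpace s := hsm.standardBorel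
  have hemb : MeasurableEmbedding (s.domRestrict (torusProj d)) :=
    (measurable_torusProj.comp measurable_subtype_coe).measurableEmbedding hinj.injective
  obtain ⟨Φ, hΦm, hΦ⟩ := hemb.exists_stronglyMeasurable_extend
    (hF.stronglyMeasurable_mk.comp_measurable measurable_subtype_coe) fun _ => ⟨0⟩
  refine ⟨Φ, hΦm, ?_⟩
  have hs : ∀ᵐ x ∂volume.restrict D, x ∈ s := by
    filter_upwards [ae_restrict_mem hDm, ae_restrict_of_ae (measure_eq_zero_iff_ae_notMem.1 hDs)]
      with x hxD hx
    by_contra hxs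
    exact hx ⟨hxD, hxs⟩
  filter_upwards [hs, hF.ae_eq_mk] with x hx hFx
  rw [hFx]
  exact congrFun hΦ ⟨x, hx⟩

lemma mFourier_torusProj (l : Fin d → ℤ) (x : Fin d → ℝ) :
    mFourier l (torusProj d x) = e2pi (intVec l ⬝ᵥ x) := by
  simp only [mFourier, ContinuousMap.coe_mk, torusProj, fourier_coe_apply, e2pi, dotProduct,
    intVec, ← Complex.exp_sum, Complex.ofReal_sum, Finset.mul_sum]
  congr 1
  refine Finset.sum_congr rfl fun i _ => ?_
  push_cast
  ring

lemma integral_comp_torusProj {D : Set (Fin d → ℝ)}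
    (hD : IsAddFundamentalDomain (intLattice d) D) {ψ : UnitAddTorus (Fin d) → ℂ}
    (hψ : AEStronglyMeasurable ψ (torusHaar d)) :
    ∫ x in D, ψ (torusProj d x) = ∫ y, ψ y ∂torusHaar d := by
  have hq := measurePreserving_torusProj hD
  rw [← hq.map_eq, integral_map hq.measurable.aemeasurable (by rwa [hq.map_eq])]

lemma exists_memLp_comp_torusProj_ae_eq {D : Set (Fin d → ℝ)} (hDm : MeasurableSet D)
    (hD : IsAddFundamentalDomain (intLattice d) D) {F : (Fin d → ℝ) → ℂ}
    (hF : MemLp F 2 (volume.restrict D)) :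
    ∃ Φ : UnitAddTorus (Fin d) → ℂ, MemLp Φ 2 (torusHaar d) ∧
      Φ ∘ torusProj d =ᵐ[volume.restrict D] F := by
  obtain ⟨Φ, hΦm, hΦ⟩ := exists_comp_torusProj_ae_eq hDm hD hF.aestronglyMeasurable
  have hq := measurePreserving_torusProj hD
  refine ⟨Φ, ?_, hΦ⟩
  rw [← hq.map_eq, memLp_map_measure_iff (by rw [hq.map_eq]; exact hΦm.aestronglyMeasurable)
    hq.measurable.aemeasurable]
  exact hF.ae_eq hΦ.symm

lemma mFourierCoeff_neg_eq_setIntegral {D : Set (Fin d → ℝ)}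
    (hD : IsAddFundamentalDomain (intLattice d) D) {F : (Fin d → ℝ) → ℂ}
    {Φ : UnitAddTorus (Fin d) → ℂ} (hΦ : MemLp Φ 2 (torusHaar d))
    (hΦF : Φ ∘ torusProj d =ᵐ[volume.restrict D] F) (l : Fin d → ℤ) :
    mFourierCoeff Φ (-l) = ∫ x in D, F x * e2pi (intVec l ⬝ᵥ x) := by
  change ∫ t, mFourier (-(-l)) t • Φ t ∂torusHaar d = _
  rw [neg_neg, ← integral_comp_torusProj (ψ := fun y => mFourier l y • Φ y) hD
    (((mFourier l).continuous.aestronglyMeasurable).smul hΦ.aestronglyMeasurable)]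
  refine integral_congr_ae ?_
  filter_upwards [hΦF] with x hx
  rw [smul_eq_mul, mFourier_torusProj, ← Function.comp_apply (f := Φ), hx, mul_comm]

theorem hasSum_setIntegral_mul_e2pi_mul_conj {D : Set (Fin d → ℝ)} (hDm : MeasurableSet D)
    (hD : IsAddFundamentalDomain (intLattice d) D) {F₁ F₂ : (Fin d → ℝ) → ℂ}
    (h₁ : MemLp F₁ 2 (volume.restrict D)) (h₂ : MemLp F₂ 2 (volume.restrict D)) :
    HasSum (fun l : Fin d → ℤ => (∫ x in D, F₁ x * e2pi (intVec l ⬝ᵥ x)) *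
      conj (∫ x in D, F₂ x * e2pi (intVec l ⬝ᵥ x))) (∫ x in D, F₁ x * conj (F₂ x)) := by
  obtain ⟨Φ₁, hΦ₁, hΦF₁⟩ := exists_memLp_comp_torusProj_ae_eq hDm hD h₁
  obtain ⟨Φ₂, hΦ₂, hΦF₂⟩ := exists_memLp_comp_torusProj_ae_eq hDm hD h₂
  have hcoeff : ∀ {Φ : UnitAddTorus (Fin d) → ℂ} (hΦ : MemLp Φ 2 (torusHaar d)),
      mFourierCoeff (hΦ.toLp Φ) = mFourierCoeff Φ := fun hΦ => funext fun n =>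
    integral_congr_ae (by filter_upwards [hΦ.coeFn_toLp] with y hy; rw [hy])
  have hParseval : HasSum (fun n => conj (mFourierCoeff Φ₂ n) * mFourierCoeff Φ₁ n)
      (∫ y, conj (Φ₂ y) * Φ₁ y ∂torusHaar d) := by
    have h := hasSum_prod_mFourierCoeff (hΦ₂.toLp Φ₂) (hΦ₁.toLp Φ₁)
    rw [hcoeff hΦ₁, hcoeff hΦ₂] at h
    convert h using 1
    exact integral_congr_ae ((hΦ₂.coeFn_toLp.fun_comp conj).mul hΦ₁.coeFn_toLp).symm
  have hvalue : ∫ y, conj (Φ₂ y) * Φ₁ y ∂torusHaar d = ∫ x in D, F₁ x * conj (F₂ x) := by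
    rw [← integral_comp_torusProj (ψ := fun y => conj (Φ₂ y) * Φ₁ y) hD
      ((continuous_star.comp_aestronglyMeasurable hΦ₂.1).mul hΦ₁.1)]
    refine integral_congr_ae ?_
    filter_upwards [hΦF₁, hΦF₂] with x hx₁ hx₂
    simp only [← Function.comp_apply (f := Φ₁), ← Function.comp_apply (f := Φ₂), hx₁, hx₂, mul_comm]
  rw [hvalue, ← (Equiv.neg (Fin d → ℤ)).hasSum_iff] at hParseval
  refine hParseval.congr_fun fun l => ?_
  simp only [Function.comp_apply, Equiv.neg_apply, mFourierCoeff_neg_eq_setIntegral hD hΦ₁ hΦF₁,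
    mFourierCoeff_neg_eq_setIntegral hD hΦ₂ hΦF₂, mul_comm]

section LinearChangeOfVariables

variable {ι : Type*} [Fintype ι] [DecidableEq ι] {A : Matrix ι ι ℝ}

lemma inv_mulVec_mulVec (hA : IsUnit A.det) (x : ι → ℝ) : A⁻¹ *ᵥ (A *ᵥ x) = x := by
  rw [Matrix.mulVec_mulVec, Matrix.nonsing_inv_mul _ hA, Matrix.one_mulVec]

lemma measurableEmbedding_mulVec (hA : IsUnit A.det) : MeasurableEmbedding (A *ᵥ ·) :=
  (Matrix.toLin' A).continuous_of_finiteDimensional.measurable.measurableEmbedding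
    (Matrix.mulVec_injective_iff_isUnit.2 ((Matrix.isUnit_iff_isUnit_det A).2 hA))

lemma map_mulVec_volume (hA : IsUnit A.det) :
    Measure.map (A *ᵥ ·) volume = ENNReal.ofReal |A.det|⁻¹ • volume := by
  have h := Real.map_matrix_volume_pi_eq_smul_volume_pi hA.ne_zero
  rwa [Matrix.toLin'_apply', abs_inv] at h

lemma integral_comp_mulVec {E : Type*} [NormedAddCommGroup E] [NormedSpace ℝ E]
    (hA : IsUnit A.det) (g : (ι → ℝ) → E) :
    ∫ x, g (A *ᵥ x) = |A.det|⁻¹ • ∫ y, g y := by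
  rw [← (measurableEmbedding_mulVec hA).integral_map, map_mulVec_volume hA,
    integral_smul_measure, ENNReal.toReal_ofReal (by positivity)]

lemma memLp_comp_mulVec {E : Type*} [NormedAddCommGroup E] {p : ℝ≥0∞} (hA : IsUnit A.det)
    {f : (ι → ℝ) → E} (hf : MemLp f p volume) : MemLp (fun x => f (A *ᵥ x)) p volume :=
  (measurableEmbedding_mulVec hA).memLp_map_measure_iff.1
    (by rw [map_mulVec_volume hA]; exact hf.smul_measure ENNReal.ofReal_ne_top)

end LinearChangeOfVariables

lemma _root_.IsParsevalFrame.summable_norm_sq {α ι : Type*} [MeasurableSpace α] {μ : Measure α}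
    {F : ι → α → ℂ} (hF : IsParsevalFrame μ F) {g : α → ℂ} (hg : MemLp g 2 μ) :
    Summable fun i => ‖∫ x, g x * conj (F i x) ∂μ‖ ^ 2 := by
  -- `∑'` of a non-summable family is `0`, so the frame identity then forces `g = 0` a.e.
  by_contra hns
  have hzero : ∫ x, ‖g x‖ ^ 2 ∂μ = 0 := by rw [← hF g hg, tsum_eq_zero_of_not_summable hns]
  have hg0 : g =ᵐ[μ] 0 := by
    filter_upwards [(integral_eq_zero_iff_of_nonneg (fun x => sq_nonneg ‖g x‖)
      ((memLp_two_iff_integrable_sq_norm hg.1).1 hg)).1 hzero] with x hx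
    simpa using hx
  refine hns (summable_zero.congr fun i => ?_)
  have hprod : (fun x => g x * conj (F i x)) =ᵐ[μ] 0 := by
    filter_upwards [hg0] with x hx
    simp [hx]
  simp [integral_congr_ae hprod]

lemma summable_mul_conj_of_summable_norm_sq {ι : Type*} {a b : ι → ℂ}
    (ha : Summable fun i => ‖a i‖ ^ 2) (hb : Summable fun i => ‖b i‖ ^ 2) :
    Summable fun i => a i * conj (b i) :=
  .of_norm_bounded ((ha.add hb).div_const 2) fun i => by
    rw [norm_mul, RCLike.norm_conj]
    nlinarith [sq_nonneg (‖a i‖ - ‖b i‖)]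

lemma mul_conj_gaborOp_indicator (B : Matrix (Fin d) (Fin d) ℝ) (E : Set (Fin d → ℝ))
    (f : (Fin d → ℝ) → ℂ) (m l : Fin d → ℤ) (c : ℝ) (t : Fin d → ℝ) :
    f t * conj (gaborOp B m l (fun x => (c : ℂ) * E.indicator 1 x) t)
      = c * (setTranslate (intVec m) E).indicator
          (fun t => f t * e2pi (intVec l ⬝ᵥ (Bᵀ *ᵥ t))) t := by
  have hdot : intVec l ⬝ᵥ (Bᵀ *ᵥ t) = B *ᵥ intVec l ⬝ᵥ t := by
    rw [Matrix.dotProduct_mulVec, Matrix.vecMul_transpose]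
  by_cases ht : t ∈ setTranslate (intVec m) E
  · rw [Set.indicator_of_mem ht, gaborOp, Set.indicator_of_mem (mem_setTranslate.1 ht), hdot,
      map_mul, conj_e2pi, neg_neg, map_mul, Complex.conj_ofReal]
    simp only [Pi.one_apply, map_one]
    ring
  · rw [Set.indicator_of_notMem ht, gaborOp,
      Set.indicator_of_notMem (mt mem_setTranslate.2 ht)]
    simp

def gaborImage (B : Matrix (Fin d) (Fin d) ℝ) (E : Set (Fin d → ℝ)) (m : Fin d → ℤ) :
    Set (Fin d → ℝ) :=
  (Bᵀ *ᵥ ·) '' setTranslate (intVec m) E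

lemma measurableSet_gaborImage {B : Matrix (Fin d) (Fin d) ℝ} (hB : IsUnit B.det)
    {E : Set (Fin d → ℝ)} (hE : MeasurableSet E) (m : Fin d → ℤ) :
    MeasurableSet (gaborImage B E m) :=
  (measurableEmbedding_mulVec (by rwa [Matrix.det_transpose])).measurableSet_image.2
    (measurableSet_setTranslate hE _)

-- `⟨f, π_B(m,l) u⟩` for the window `u = |det B|^{1/2} χ_E`.
def gaborCoeff (B : Matrix (Fin d) (Fin d) ℝ) (E : Set (Fin d → ℝ)) (f : (Fin d → ℝ) → ℂ)
    (m l : Fin d → ℤ) : ℂ :=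
  ∫ t, f t * conj (gaborOp B m l (fun x => (√|B.det| : ℂ) * E.indicator 1 x) t)

lemma gaborCoeff_eq_setIntegral {B : Matrix (Fin d) (Fin d) ℝ} (hB : IsUnit B.det)
    {E : Set (Fin d → ℝ)} (hE : MeasurableSet E) (f : (Fin d → ℝ) → ℂ) (m l : Fin d → ℤ) :
    gaborCoeff B E f m l = ((√|B.det| * |B.det|⁻¹ : ℝ) : ℂ) *
      ∫ s in gaborImage B E m, f (Bᵀ⁻¹ *ᵥ s) * e2pi (intVec l ⬝ᵥ s) := by
  have hA : IsUnit Bᵀ.det := by rwa [Matrix.det_transpose]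
  have hψ : ∀ t, (setTranslate (intVec m) E).indicator
      (fun t => f t * e2pi (intVec l ⬝ᵥ (Bᵀ *ᵥ t))) t = (gaborImage B E m).indicator
        (fun s => f (Bᵀ⁻¹ *ᵥ s) * e2pi (intVec l ⬝ᵥ s)) (Bᵀ *ᵥ t) := by
    intro t
    by_cases ht : t ∈ setTranslate (intVec m) E
    · rw [Set.indicator_of_mem ht, Set.indicator_of_mem
        (show Bᵀ *ᵥ t ∈ gaborImage B E m from Set.mem_image_of_mem _ ht), inv_mulVec_mulVec hA]
    · rw [Set.indicator_of_notMem ht, Set.indicator_of_notMem (show Bᵀ *ᵥ t ∉ gaborImage B E m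
        from mt (measurableEmbedding_mulVec hA).injective.mem_set_image.1 ht)]
  simp_rw [gaborCoeff, mul_conj_gaborOp_indicator, hψ]
  rw [integral_const_mul, integral_comp_mulVec hA,
    integral_indicator (measurableSet_gaborImage hB hE m), Matrix.det_transpose, Complex.real_smul]
  push_cast
  ring

lemma setIntegral_indicator_mul_of_subset {α : Type*} [MeasurableSpace α] {μ : Measure α}
    {D W : Set α} (hW : MeasurableSet W) (hWD : W ⊆ D) (φ ψ : α → ℂ) :
    ∫ x in D, W.indicator φ x * ψ x ∂μ = ∫ x in W, φ x * ψ x ∂μ := by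
  conv_rhs => rw [← Set.inter_eq_right.2 hWD, ← setIntegral_indicator hW]
  exact integral_congr_ae (.of_forall fun x => (Set.indicator_mul_left W φ ψ).symm)

lemma setIntegral_indicator_mul_conj_indicator {α : Type*} [MeasurableSpace α] {μ : Measure α}
    {D W₁ W₂ : Set α} (hW₁ : MeasurableSet W₁) (hW₂ : MeasurableSet W₂) (hW : W₁ ∩ W₂ ⊆ D)
    (F₁ F₂ : α → ℂ) :
    ∫ x in D, W₁.indicator F₁ x * conj (W₂.indicator F₂ x) ∂μ
      = ∫ x in W₁ ∩ W₂, F₁ x * conj (F₂ x) ∂μ := by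
  rw [← Set.inter_eq_right.2 hW, ← setIntegral_indicator (hW₁.inter hW₂)]
  refine integral_congr_ae (.of_forall fun x => ?_)
  dsimp only
  rw [Set.inter_indicator_mul]
  by_cases hx : x ∈ W₂
  · rw [Set.indicator_of_mem hx, Set.indicator_of_mem hx]
  · rw [Set.indicator_of_notMem hx, Set.indicator_of_notMem hx, map_zero]

theorem hasSum_gaborCoeff_mul_conj {B₁ B₂ : Matrix (Fin d) (Fin d) ℝ} (hB₁ : IsUnit B₁.det)
    (hB₂ : IsUnit B₂.det) {E₁ E₂ : Set (Fin d → ℝ)} (hE₁ : MeasurableSet E₁)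
    (hE₂ : MeasurableSet E₂) {f g : (Fin d → ℝ) → ℂ} (hf : MemLp f 2 volume)
    (hg : MemLp g 2 volume) {m : Fin d → ℤ} {D : Set (Fin d → ℝ)} (hD : IsFundDomain D)
    (hsub : gaborImage B₁ E₁ m ∪ gaborImage B₂ E₂ m ⊆ D) :
    HasSum (fun l => gaborCoeff B₁ E₁ f m l * conj (gaborCoeff B₂ E₂ g m l))
      (((√|B₁.det| * |B₁.det|⁻¹ * (√|B₂.det| * |B₂.det|⁻¹) : ℝ) : ℂ) *
        ∫ s in gaborImage B₁ E₁ m ∩ gaborImage B₂ E₂ m,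
          f (B₁ᵀ⁻¹ *ᵥ s) * conj (g (B₂ᵀ⁻¹ *ᵥ s))) := by
  have hF : ∀ {B : Matrix (Fin d) (Fin d) ℝ} {E : Set (Fin d → ℝ)} {f : (Fin d → ℝ) → ℂ},
      IsUnit B.det → MeasurableSet E → MemLp f 2 volume →
      MemLp ((gaborImage B E m).indicator fun s => f (Bᵀ⁻¹ *ᵥ s)) 2 (volume.restrict D) :=
    fun hB hE hf => ((memLp_comp_mulVec (by rwa [Matrix.isUnit_nonsing_inv_det_iff,
      Matrix.det_transpose]) hf).indicator (measurableSet_gaborImage hB hE m)).restrict D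
  have hParseval := (hasSum_setIntegral_mul_e2pi_mul_conj hD.1 hD.isAddFundamentalDomain
    (hF hB₁ hE₁ hf) (hF hB₂ hE₂ hg)).mul_left
      (((√|B₁.det| * |B₁.det|⁻¹ * (√|B₂.det| * |B₂.det|⁻¹) : ℝ) : ℂ))
  rw [setIntegral_indicator_mul_conj_indicator (measurableSet_gaborImage hB₁ hE₁ m)
    (measurableSet_gaborImage hB₂ hE₂ m)
    (Set.inter_subset_left.trans (Set.subset_union_left.trans hsub))] at hParseval
  refine hParseval.congr_fun fun l => ?_
  rw [gaborCoeff_eq_setIntegral hB₁ hE₁, gaborCoeff_eq_setIntegral hB₂ hE₂,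
    setIntegral_indicator_mul_of_subset (measurableSet_gaborImage hB₁ hE₁ m)
      (Set.subset_union_left.trans hsub),
    setIntegral_indicator_mul_of_subset (measurableSet_gaborImage hB₂ hE₂ m)
      (Set.subset_union_right.trans hsub), map_mul, Complex.conj_ofReal]
  push_cast
  ring

end Gabor

open Gabor

theorem gabor_coefficient_sequences_orthogonal_general
    (d : ℕ)
    (B₁ B₂ : Matrix (Fin d) (Fin d) ℝ) (hB₁ : IsUnit B₁.det) (hB₂ : IsUnit B₂.det)
    (E₁ E₂ : Set (Fin d → ℝ)) (hE₁ : MeasurableSet E₁) (hE₂ : MeasurableSet E₂)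
    (hframe₁ : IsParsevalFrame (volume : Measure (Fin d → ℝ))
      (fun q : (Fin d → ℤ) × (Fin d → ℤ) =>
        gaborOp B₁ q.1 q.2 fun x => (Real.sqrt |B₁.det| : ℂ) * E₁.indicator 1 x))
    (hframe₂ : IsParsevalFrame (volume : Measure (Fin d → ℝ))
      (fun q : (Fin d → ℤ) × (Fin d → ℤ) =>
        gaborOp B₂ q.1 q.2 fun x => (Real.sqrt |B₂.det| : ℂ) * E₂.indicator 1 x))
    (hsub : ∀ mv : Fin d → ℤ, ∃ D : Set (Fin d → ℝ), IsFundDomain D ∧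
      ((fun x => B₁.transpose.mulVec x) '' setTranslate (intVec mv) E₁) ∪
        ((fun x => B₂.transpose.mulVec x) '' setTranslate (intVec mv) E₂) ⊆ D)
    (hnull : ∀ mv : Fin d → ℤ,
      volume (((fun x => B₁.transpose.mulVec x) '' setTranslate (intVec mv) E₁) ∩
        ((fun x => B₂.transpose.mulVec x) '' setTranslate (intVec mv) E₂)) = 0) :
    ∀ f g : (Fin d → ℝ) → ℂ, MemLp f 2 volume → MemLp g 2 volume →
      ∑' q : (Fin d → ℤ) × (Fin d → ℤ),
        (∫ t, f t * conj (gaborOp B₁ q.1 q.2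
            (fun x => (Real.sqrt |B₁.det| : ℂ) * E₁.indicator 1 x) t)) *
          conj (∫ t, g t * conj (gaborOp B₂ q.1 q.2
            (fun x => (Real.sqrt |B₂.det| : ℂ) * E₂.indicator 1 x) t)) = 0 := by
  intro f g hf hg
  change ∑' q : (Fin d → ℤ) × (Fin d → ℤ),
    gaborCoeff B₁ E₁ f q.1 q.2 * conj (gaborCoeff B₂ E₂ g q.1 q.2) = 0
  have hsum : Summable fun q : (Fin d → ℤ) × (Fin d → ℤ) =>
      gaborCoeff B₁ E₁ f q.1 q.2 * conj (gaborCoeff B₂ E₂ g q.1 q.2) :=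
    summable_mul_conj_of_summable_norm_sq (hframe₁.summable_norm_sq hf)
      (hframe₂.summable_norm_sq hg)
  have hinner : ∀ m, ∑' l, gaborCoeff B₁ E₁ f m l * conj (gaborCoeff B₂ E₂ g m l) = 0 := by
    intro m
    obtain ⟨D, hD, hWD⟩ := hsub m
    have hW : volume (gaborImage B₁ E₁ m ∩ gaborImage B₂ E₂ m) = 0 := hnull m
    rw [(hasSum_gaborCoeff_mul_conj hB₁ hB₂ hE₁ hE₂ hf hg hD hWD).tsum_eq,
      Measure.restrict_eq_zero.2 hW, integral_zero_measure, mul_zero]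
  rw [hsum.tsum_prod' hsum.prod_factor]
  simp [hinner]

/-- Orthogonality of Gabor coefficient sequences. For `i = 1,2` let
`u_i = |det B_i|^{1/2} χ_{E_i}` where `E_i` tiles `ℝ^d` by `ℤ^d` and packs by
`B_i^{−tr}ℤ^d`, so that the Gabor families are Parseval frames. If for every `m ∈ ℤ^d`
the union `B_1^{tr}(E_1+m) ∪ B_2^{tr}(E_2+m)` fits in a measurable fundamental domain
for `ℤ^d` and the intersection `B_1^{tr}(E_1+m) ∩ B_2^{tr}(E_2+m)` is Lebesgue-null,
then for all `f, g ∈ L²(ℝ^d)` the coefficient sequences are orthogonal in `ℓ²`. -/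
theorem gabor_coefficient_sequences_orthogonal
    (d : ℕ) (hd : 1 ≤ d)
    (B₁ B₂ : Matrix (Fin d) (Fin d) ℝ) (hB₁ : IsUnit B₁.det) (hB₂ : IsUnit B₂.det)
    (E₁ E₂ : Set (Fin d → ℝ)) (hE₁ : MeasurableSet E₁) (hE₂ : MeasurableSet E₂)
    (htile₁ : TilesBy E₁ intVec) (htile₂ : TilesBy E₂ intVec)
    (hpack₁ : PacksBy E₁ (fun k => (B₁.transpose)⁻¹.mulVec (intVec k)))
    (hpack₂ : PacksBy E₂ (fun k => (B₂.transpose)⁻¹.mulVec (intVec k)))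
    (hframe₁ : IsParsevalFrame (volume : Measure (Fin d → ℝ))
      (fun q : (Fin d → ℤ) × (Fin d → ℤ) =>
        gaborOp B₁ q.1 q.2 fun x => (Real.sqrt |B₁.det| : ℂ) * E₁.indicator 1 x))
    (hframe₂ : IsParsevalFrame (volume : Measure (Fin d → ℝ))
      (fun q : (Fin d → ℤ) × (Fin d → ℤ) =>
        gaborOp B₂ q.1 q.2 fun x => (Real.sqrt |B₂.det| : ℂ) * E₂.indicator 1 x))
    (hsub : ∀ mv : Fin d → ℤ, ∃ D : Set (Fin d → ℝ), IsFundDomain D ∧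
      ((fun x => B₁.transpose.mulVec x) '' setTranslate (intVec mv) E₁) ∪
        ((fun x => B₂.transpose.mulVec x) '' setTranslate (intVec mv) E₂) ⊆ D)
    (hnull : ∀ mv : Fin d → ℤ,
      volume (((fun x => B₁.transpose.mulVec x) '' setTranslate (intVec mv) E₁) ∩
        ((fun x => B₂.transpose.mulVec x) '' setTranslate (intVec mv) E₂)) = 0) :
    ∀ f g : (Fin d → ℝ) → ℂ, MemLp f 2 volume → MemLp g 2 volume →
      ∑' q : (Fin d → ℤ) × (Fin d → ℤ),
        (∫ t, f t * conj (gaborOp B₁ q.1 q.2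
            (fun x => (Real.sqrt |B₁.det| : ℂ) * E₁.indicator 1 x) t)) *
          conj (∫ t, g t * conj (gaborOp B₂ q.1 q.2
            (fun x => (Real.sqrt |B₂.det| : ℂ) * E₂.indicator 1 x) t)) = 0 :=
  gabor_coefficient_sequences_orthogonal_general d B₁ B₂ hB₁ hB₂ E₁ E₂ hE₁ hE₂ hframe₁ hframe₂ hsub
    hnull
end
end
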